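/- arXiv:2410.16398 — 4 statements merged into one kernel-verified Lean document; each statement's English description precedes it below -/
import Mathlib

section
/- Let g_1,…,g_M be vectors in the Euclidean space ℝ^n (M ≥ 1). Then sup_{d ∈ ℝ^n} min_{k ∈ {1,…,M}} ( ⟨d, g_k⟩ − (1/2)‖d‖² ) = min_{w ∈ Δ_M} (1/2)‖Σ_{k=1}^M w_k g_k‖², where the minimum over the (compact) simplex is attained; moreover, for any minimizer w* of ‖Σ_k w_k g_k‖ over Δ_M, the supremum on the left is attained at d* = Σ_{k=1}^M w*_k g_k. (This is the equivalence between the MGDA max–min descent problem and the minimum-norm convex-combination problem over the gradients.) -/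
/-!
Every `w ∈ Δ_M` bounds the max–min problem from above: the minimum over `k` is at most the
`w`-average, which equals `⟪d, u⟫ - ½‖d‖² = ½‖u‖² - ½‖d - u‖² ≤ ½‖u‖²` for `u = ∑ k, w k • g k`.
If `u` has minimal norm on the convex set `{∑ k, w k • g k | w ∈ Δ_M}`, the first-order
optimality condition gives `‖u‖² ≤ ⟪u, g k⟫` for every `k`, so `d = u` attains this bound.
-/

open scoped RealInnerProductSpace

open Finset

section

variable {ι : Type*} [Fintype ι]

lemma inf'_le_sum_mul_of_mem_stdSimplex {w : ι → ℝ} (hw : w ∈ stdSimplex ℝ ι)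
    (h : (univ : Finset ι).Nonempty) (f : ι → ℝ) : univ.inf' h f ≤ ∑ i, w i * f i :=
  calc univ.inf' h f = ∑ i, w i * univ.inf' h f := by rw [← sum_mul, hw.2, one_mul]
    _ ≤ ∑ i, w i * f i :=
      sum_le_sum fun i _ => mul_le_mul_of_nonneg_left (inf'_le f (mem_univ i)) (hw.1 i)

variable {E : Type*} [NormedAddCommGroup E] [InnerProductSpace ℝ E]

lemma convex_image_stdSimplex (g : ι → E) :
    Convex ℝ ((fun w : ι → ℝ => ∑ k, w k • g k) '' stdSimplex ℝ ι) :=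
  (convex_stdSimplex ℝ ι).linear_image (Fintype.linearCombination ℝ g)

lemma inner_sub_half_norm_sq_le (d u : E) : ⟪d, u⟫ - 1 / 2 * ‖d‖ ^ 2 ≤ 1 / 2 * ‖u‖ ^ 2 := by
  have := norm_sub_sq_real d u
  nlinarith [sq_nonneg ‖d - u‖]

lemma Convex.norm_sq_le_inner_of_forall_norm_le {K : Set E} (hK : Convex ℝ K) {u : E}
    (hu : u ∈ K) (hmin : ∀ v ∈ K, ‖u‖ ≤ ‖v‖) {v : E} (hv : v ∈ K) : ‖u‖ ^ 2 ≤ ⟪u, v⟫ := by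
  have : Nonempty K := ⟨⟨u, hu⟩⟩
  have hinf : ‖0 - u‖ = ⨅ v : K, ‖0 - (v : E)‖ := by
    simp only [zero_sub, norm_neg]
    have hbdd : BddBelow (Set.range fun v : K => ‖(v : E)‖) :=
      ⟨0, Set.forall_mem_range.2 fun _ => norm_nonneg _⟩
    exact le_antisymm (le_ciInf fun v => hmin v v.2) (ciInf_le hbdd ⟨u, hu⟩)
  have := (norm_eq_iInf_iff_real_inner_le_zero hK hu).mp hinf v hv
  rw [zero_sub, inner_neg_left, inner_sub_right, real_inner_self_eq_norm_sq] at this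
  linarith

variable (g : ι → E) {w : ι → ℝ}

lemma inf'_inner_sub_half_norm_sq_le (hw : w ∈ stdSimplex ℝ ι) (h : (univ : Finset ι).Nonempty) (d : E) :
    univ.inf' h (fun k => ⟪d, g k⟫ - 1 / 2 * ‖d‖ ^ 2) ≤ 1 / 2 * ‖∑ k, w k • g k‖ ^ 2 :=
  calc univ.inf' h (fun k => ⟪d, g k⟫ - 1 / 2 * ‖d‖ ^ 2)
      ≤ ∑ k, w k * (⟪d, g k⟫ - 1 / 2 * ‖d‖ ^ 2) := inf'_le_sum_mul_of_mem_stdSimplex hw h _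
    _ = ⟪d, ∑ k, w k • g k⟫ - 1 / 2 * ‖d‖ ^ 2 := by
      simp only [mul_sub, sum_sub_distrib, ← sum_mul, hw.2, one_mul, inner_sum,
        real_inner_smul_right]
    _ ≤ 1 / 2 * ‖∑ k, w k • g k‖ ^ 2 := inner_sub_half_norm_sq_le _ _

lemma inf'_inner_sub_half_norm_sq_eq_of_forall_norm_le (hw : w ∈ stdSimplex ℝ ι)
    (hmin : ∀ w' ∈ stdSimplex ℝ ι, ‖∑ k, w k • g k‖ ≤ ‖∑ k, w' k • g k‖)
    (h : (univ : Finset ι).Nonempty) :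
    univ.inf' h (fun k => ⟪∑ j, w j • g j, g k⟫ - 1 / 2 * ‖∑ j, w j • g j‖ ^ 2) =
      1 / 2 * ‖∑ j, w j • g j‖ ^ 2 := by
  classical
  refine le_antisymm (inf'_inner_sub_half_norm_sq_le g hw h _) (le_inf' _ _ fun k _ => ?_)
  have hgk : g k ∈ (fun w : ι → ℝ => ∑ j, w j • g j) '' stdSimplex ℝ ι :=
    ⟨Pi.single k 1, single_mem_stdSimplex ℝ k, by simp [Pi.single_apply]⟩
  have := (convex_image_stdSimplex g).norm_sq_le_inner_of_forall_norm_le ⟨w, hw, rfl⟩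
    (by rintro _ ⟨w', hw', rfl⟩; exact hmin w' hw') hgk
  linarith

end

/-- **MGDA max–min equivalence.** For vectors `g 1, …, g M` in `ℝ^n` (`M ≥ 1`),
`sup_{d} min_k (⟨d, g k⟩ − ½‖d‖²) = min_{w ∈ Δ_M} ½‖∑ k, w k • g k‖²`, the minimum over the
simplex being attained; moreover, for any minimizer `w*` of `‖∑ k, w k • g k‖` over `Δ_M`,
the supremum on the left is attained at `d* = ∑ k, w* k • g k`. -/
theorem stmt5 {n M : ℕ} (hM : 1 ≤ M) (g : Fin M → EuclideanSpace ℝ (Fin n)) :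
    ∃ m : ℝ,
      IsLeast
        ((fun w : Fin M → ℝ => (1 / 2) * ‖∑ k, w k • g k‖ ^ 2) '' stdSimplex ℝ (Fin M)) m ∧
      IsGreatest
        (Set.range fun d : EuclideanSpace ℝ (Fin n) =>
          Finset.univ.inf' (Finset.univ_nonempty_iff.mpr ⟨⟨0, hM⟩⟩)
            (fun k => ⟪d, g k⟫ - (1 / 2) * ‖d‖ ^ 2)) m ∧
      ∀ w ∈ stdSimplex ℝ (Fin M),
        (∀ w' ∈ stdSimplex ℝ (Fin M), ‖∑ k, w k • g k‖ ≤ ‖∑ k, w' k • g k‖) →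
        Finset.univ.inf' (Finset.univ_nonempty_iff.mpr ⟨⟨0, hM⟩⟩)
          (fun k => ⟪∑ j, w j • g j, g k⟫ - (1 / 2) * ‖∑ j, w j • g j‖ ^ 2) = m := by
  have hcont : Continuous fun w : Fin M → ℝ => ‖∑ k, w k • g k‖ := by fun_prop
  obtain ⟨w₀, hw₀, hmin₀⟩ := (isCompact_stdSimplex ℝ (Fin M)).exists_isMinOn
    ⟨_, single_mem_stdSimplex ℝ ⟨0, hM⟩⟩ hcont.continuousOn
  rw [isMinOn_iff] at hmin₀
  have hvalue := inf'_inner_sub_half_norm_sq_eq_of_forall_norm_le g hw₀ hmin₀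
  refine ⟨1 / 2 * ‖∑ k, w₀ k • g k‖ ^ 2, ⟨⟨w₀, hw₀, rfl⟩, ?_⟩, ⟨⟨_, hvalue _⟩, ?_⟩, ?_⟩
  · rintro _ ⟨w, hw, rfl⟩
    have := pow_le_pow_left₀ (norm_nonneg _) (hmin₀ w hw) 2
    linarith
  · rintro _ ⟨d, rfl⟩
    exact inf'_inner_sub_half_norm_sq_le g hw₀ _ d
  · intro w hw hmin
    rw [inf'_inner_sub_half_norm_sq_eq_of_forall_norm_le g hw hmin,
      (hmin w₀ hw₀).antisymm (hmin₀ w hw)]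
end

section
/- Let Y_1, Y_2, J be real d×M matrices such that every column j_k of J satisfies ‖j_k‖ ≤ G (G ≥ 0), and let w ∈ Δ_M. Then ‖Y_1ᵀ Y_2 w‖ ≤ ‖Y_1 − J‖_op · ‖(Y_2 − J)w‖ + √M · G · ‖(Y_2 − J)w‖ + G · ‖Y_1 − J‖_op + √M · G². -/
open scoped BigOperators Matrix

/-- Euclidean norm of a vector in `ℝ^n`. -/
noncomputable def eNorm {n : ℕ} (v : Fin n → ℝ) : ℝ :=
  Real.sqrt (∑ i, v i ^ 2)

/-- Operator norm of a real `d × M` matrix with respect to Euclidean norms. -/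
noncomputable def opNorm {d M : ℕ} (A : Matrix (Fin d) (Fin M) ℝ) : ℝ :=
  ‖LinearMap.toContinuousLinearMap (Matrix.toEuclideanLin A)‖

/-!
With `A = Y₁ - J` and `B = Y₂ - J`, write `Y₁ᵀ Y₂ w = Y₁ᵀ (B w + J w)`; since `‖Y₁ᵀ‖ = ‖Y₁‖`, the left
side is at most `(‖A‖ + ‖J‖) (‖B w‖ + ‖J w‖)`. The entries of `Jᵀ v` are the inner products
`⟪jₖ, v⟫`, which gives `‖J‖ ≤ √M G`, and `J w` is a convex combination of the columns, so
`‖J w‖ ≤ G`. Expanding the product gives the four terms.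
-/

open scoped Matrix.Norms.L2Operator
open WithLp (toLp)

lemma eNorm_eq_norm {n : ℕ} (v : Fin n → ℝ) : eNorm v = ‖toLp 2 v‖ := by
  simp [eNorm, EuclideanSpace.norm_eq, sq_abs]

lemma opNorm_eq_norm {d M : ℕ} (A : Matrix (Fin d) (Fin M) ℝ) : opNorm A = ‖A‖ := rfl

lemma EuclideanSpace.norm_le_sqrt_card_mul {ι : Type*} [Fintype ι] {x : EuclideanSpace ℝ ι}
    {C : ℝ} (hC : 0 ≤ C) (hx : ∀ i, |x i| ≤ C) : ‖x‖ ≤ √(Fintype.card ι) * C := by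
  rw [EuclideanSpace.norm_eq, ← Real.sqrt_sq hC, ← Real.sqrt_mul (Nat.cast_nonneg _)]
  gcongr
  calc ∑ i, ‖x i‖ ^ 2 ≤ ∑ _ : ι, C ^ 2 := by
        gcongr with i
        exact hx i
    _ = _ := by simp

namespace Matrix

variable {m n : Type*} [Fintype m] [Fintype n]

lemma l2_opNorm_transpose [DecidableEq m] [DecidableEq n] (A : Matrix m n ℝ) : ‖Aᵀ‖ = ‖A‖ := by
  rw [← conjTranspose_eq_transpose_of_trivial, l2_opNorm_conjTranspose]

lemma norm_toLp_mulVec_le {𝕜 : Type*} [RCLike 𝕜] [DecidableEq n] (A : Matrix m n 𝕜) (v : n → 𝕜) :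
    ‖toLp 2 (A *ᵥ v)‖ ≤ ‖A‖ * ‖toLp 2 v‖ :=
  A.l2_opNorm_mulVec (toLp 2 v)

lemma l2_opNorm_le_sqrt_card_mul [DecidableEq m] [DecidableEq n] {A : Matrix m n ℝ} {G : ℝ}
    (hG : 0 ≤ G) (hA : ∀ k, ‖toLp 2 (Aᵀ k)‖ ≤ G) : ‖A‖ ≤ √(Fintype.card n) * G := by
  rw [← l2_opNorm_transpose, l2_opNorm_def]
  refine ContinuousLinearMap.opNorm_le_bound _ (by positivity) fun x => ?_
  have hcoord : ∀ k, |(Aᵀ *ᵥ x.ofLp) k| ≤ G * ‖x‖ := fun k =>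
    calc |(Aᵀ *ᵥ x.ofLp) k| = |inner ℝ (toLp 2 (Aᵀ k)) x| := by
          rw [EuclideanSpace.inner_eq_star_dotProduct, star_trivial, dotProduct_comm]
          rfl
      _ ≤ ‖toLp 2 (Aᵀ k)‖ * ‖x‖ := abs_real_inner_le_norm _ _
      _ ≤ G * ‖x‖ := by gcongr; exact hA k
  simpa [mul_assoc] using EuclideanSpace.norm_le_sqrt_card_mul (by positivity) hcoord

lemma norm_toLp_mulVec_le_of_mem_stdSimplex {A : Matrix m n ℝ} {G : ℝ}
    (hA : ∀ k, ‖toLp 2 (Aᵀ k)‖ ≤ G) {w : n → ℝ} (hw : w ∈ stdSimplex ℝ n) :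
    ‖toLp 2 (A *ᵥ w)‖ ≤ G := by
  have hsum : toLp 2 (A *ᵥ w) = ∑ k, w k • toLp 2 (Aᵀ k) := by
    ext i; simp [mulVec, dotProduct, mul_comm]
  simpa [hsum] using (convex_closedBall (0 : EuclideanSpace ℝ m) G).sum_mem
    (fun k _ => hw.1 k) hw.2 (fun k _ => by simpa using hA k)

lemma norm_toLp_transpose_mul_mulVec_le [DecidableEq m] [DecidableEq n] (Y₁ Y₂ J : Matrix m n ℝ)
    (w : n → ℝ) :
    ‖toLp 2 ((Y₁ᵀ * Y₂) *ᵥ w)‖ ≤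
      (‖Y₁ - J‖ + ‖J‖) * (‖toLp 2 ((Y₂ - J) *ᵥ w)‖ + ‖toLp 2 (J *ᵥ w)‖) := by
  rw [← mulVec_mulVec]
  calc _ ≤ ‖Y₁ᵀ‖ * ‖toLp 2 (Y₂ *ᵥ w)‖ := norm_toLp_mulVec_le _ _
    _ ≤ _ := by
      gcongr
      · rw [l2_opNorm_transpose]; exact norm_le_norm_sub_add _ _
      · simpa [sub_mulVec] using norm_le_norm_sub_add (toLp 2 (Y₂ *ᵥ w)) (toLp 2 (J *ᵥ w))

end Matrix

/-- For real `d × M` matrices `Y₁, Y₂, J` with every column `jₖ` of `J`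
satisfying `‖jₖ‖ ≤ G` (`G ≥ 0`) and `w ∈ Δ_M`:
`‖Y₁ᵀ Y₂ w‖ ≤ ‖Y₁ − J‖_op ‖(Y₂ − J)w‖ + √M G ‖(Y₂ − J)w‖ + G ‖Y₁ − J‖_op + √M G²`. -/
theorem stmt9 {d M : ℕ} {G : ℝ} (hG : 0 ≤ G)
    (Y₁ Y₂ J : Matrix (Fin d) (Fin M) ℝ)
    (hJ : ∀ k : Fin M, eNorm (fun i => J i k) ≤ G)
    (w : Fin M → ℝ) (hw : w ∈ stdSimplex ℝ (Fin M)) :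
    eNorm ((Y₁ᵀ * Y₂).mulVec w) ≤
      opNorm (Y₁ - J) * eNorm ((Y₂ - J).mulVec w)
        + Real.sqrt M * G * eNorm ((Y₂ - J).mulVec w)
        + G * opNorm (Y₁ - J)
        + Real.sqrt M * G ^ 2 := by
  have hcol : ∀ k, ‖toLp 2 (Jᵀ k)‖ ≤ G := fun k => (eNorm_eq_norm _).symm.trans_le (hJ k)
  have hJ_op : ‖J‖ ≤ √M * G := by
    simpa using Matrix.l2_opNorm_le_sqrt_card_mul hG hcol
  have hJ_w : ‖toLp 2 (J *ᵥ w)‖ ≤ G := Matrix.norm_toLp_mulVec_le_of_mem_stdSimplex hcol hw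
  simp only [eNorm_eq_norm, opNorm_eq_norm]
  calc _ ≤ (‖Y₁ - J‖ + ‖J‖) * (‖toLp 2 ((Y₂ - J) *ᵥ w)‖ + ‖toLp 2 (J *ᵥ w)‖) :=
        Matrix.norm_toLp_transpose_mul_mulVec_le Y₁ Y₂ J w
    _ ≤ (‖Y₁ - J‖ + √M * G) * (‖toLp 2 ((Y₂ - J) *ᵥ w)‖ + G) := by gcongr
    _ = _ := by ring
end

section
/- Let J be a fixed real d×M matrix whose columns have Euclidean norm at most G (G ≥ 0), let w ∈ Δ_M be fixed, and let Y_1, Y_2 : Ω → ℝ^{d×M} be independent random matrices with E[Y_j] = J, E‖Y_j − J‖_F² ≤ M·c for j ∈ {1,2}, and E‖(Y_2 − J)w‖² ≤ c, for some c ≥ 0. Then E‖Y_1ᵀ Y_2 w‖² ≤ M·(c + G²)². -/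
open MeasureTheory
open scoped BigOperators Matrix

/-- Frobenius norm of a real `d × M` matrix. -/
noncomputable def frobNorm {d M : ℕ} (A : Matrix (Fin d) (Fin M) ℝ) : ℝ :=
  Real.sqrt (∑ i, ∑ j, (A i j) ^ 2)

/-- The (entrywise) measurable space structure on matrices. -/
instance matrixMeasurableSpace {m n α : Type*} [MeasurableSpace α] :
    MeasurableSpace (Matrix m n α) :=
  inferInstanceAs (MeasurableSpace (m → n → α))

/-!
Pointwise, Cauchy–Schwarz gives `‖Y₁ᵀ v‖² ≤ ‖Y₁‖_F² ‖v‖²` with `v = Y₂ w`. The two factors are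
functions of `Y₁` and of `Y₂` respectively, hence independent, so the expectation of their product
splits. Each expectation is a bias–variance decomposition:
`E‖Y₁‖_F² = E‖Y₁ - J‖_F² + ‖J‖_F² ≤ M (c + G²)` and `E‖Y₂ w‖² = E‖(Y₂ - J) w‖² + ‖J w‖² ≤ c + G²`,
where `‖J w‖ ≤ G` because `J w` is a convex combination of the columns of `J`.
-/

open Finset ProbabilityTheory

lemma eNorm_sq {n : ℕ} (v : Fin n → ℝ) : eNorm v ^ 2 = ∑ i, v i ^ 2 :=
  Real.sq_sqrt (sum_nonneg fun _ _ => sq_nonneg _)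

lemma frobNorm_sq {d M : ℕ} (A : Matrix (Fin d) (Fin M) ℝ) :
    frobNorm A ^ 2 = ∑ i, ∑ j, A i j ^ 2 :=
  Real.sq_sqrt (sum_nonneg fun _ _ => sum_nonneg fun _ _ => sq_nonneg _)

lemma frobNorm_sq_eq_sum_eNorm_col_sq {d M : ℕ} (A : Matrix (Fin d) (Fin M) ℝ) :
    frobNorm A ^ 2 = ∑ j, eNorm (fun i => A i j) ^ 2 := by
  simp only [frobNorm_sq, eNorm_sq]
  exact sum_comm

lemma eNorm_transpose_mulVec_sq_le {d M : ℕ} (A : Matrix (Fin d) (Fin M) ℝ) (v : Fin d → ℝ) :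
    eNorm (Aᵀ *ᵥ v) ^ 2 ≤ frobNorm A ^ 2 * eNorm v ^ 2 := by
  rw [eNorm_sq, frobNorm_sq_eq_sum_eNorm_col_sq, sum_mul]
  gcongr with k
  rw [eNorm_sq, eNorm_sq]
  exact sum_mul_sq_le_sq_mul_sq univ (fun i => A i k) v

lemma frobNorm_sq_le_of_eNorm_col_le {d M : ℕ} {A : Matrix (Fin d) (Fin M) ℝ} {G : ℝ}
    (hA : ∀ k, eNorm (fun i => A i k) ≤ G) : frobNorm A ^ 2 ≤ M * G ^ 2 := by
  rw [frobNorm_sq_eq_sum_eNorm_col_sq]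
  calc ∑ k, eNorm (fun i => A i k) ^ 2 ≤ ∑ _k : Fin M, G ^ 2 :=
        sum_le_sum fun k _ => pow_le_pow_left₀ (Real.sqrt_nonneg _) (hA k) 2
    _ = M * G ^ 2 := by simp

lemma sq_sum_mul_le_sum_mul_sq_of_mem_stdSimplex {ι : Type*} [Fintype ι] {w : ι → ℝ}
    (hw : w ∈ stdSimplex ℝ ι) (a : ι → ℝ) : (∑ k, w k * a k) ^ 2 ≤ ∑ k, w k * a k ^ 2 := by
  simpa only [hw.2, one_mul] using sum_sq_le_sum_mul_sum_of_sq_le_mul univ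
    (fun k _ => hw.1 k) (fun k _ => mul_nonneg (hw.1 k) (sq_nonneg (a k)))
    (fun k _ => (by ring : (w k * a k) ^ 2 = w k * (w k * a k ^ 2)).le)

lemma eNorm_mulVec_sq_le_of_mem_stdSimplex {d M : ℕ} {A : Matrix (Fin d) (Fin M) ℝ} {G : ℝ}
    (hA : ∀ k, eNorm (fun i => A i k) ≤ G) {w : Fin M → ℝ} (hw : w ∈ stdSimplex ℝ (Fin M)) :
    eNorm (A *ᵥ w) ^ 2 ≤ G ^ 2 :=
  calc eNorm (A *ᵥ w) ^ 2 = ∑ i, (∑ k, w k * A i k) ^ 2 := by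
        simp only [eNorm_sq, Matrix.mulVec, dotProduct, mul_comm]
    _ ≤ ∑ i, ∑ k, w k * A i k ^ 2 :=
        sum_le_sum fun i _ => sq_sum_mul_le_sum_mul_sq_of_mem_stdSimplex hw _
    _ = ∑ k, w k * eNorm (fun i => A i k) ^ 2 := by
        simp only [eNorm_sq, mul_sum]
        exact sum_comm
    _ ≤ ∑ k, w k * G ^ 2 :=
        sum_le_sum fun k _ => mul_le_mul_of_nonneg_left
          (pow_le_pow_left₀ (Real.sqrt_nonneg _) (hA k) 2) (hw.1 k)
    _ = G ^ 2 := by rw [← sum_mul, hw.2, one_mul]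

lemma measurable_eNorm {n : ℕ} : Measurable (eNorm : (Fin n → ℝ) → ℝ) := by
  unfold eNorm
  fun_prop

lemma measurable_frobNorm {d M : ℕ} : Measurable (frobNorm : Matrix (Fin d) (Fin M) ℝ → ℝ) := by
  unfold frobNorm
  fun_prop

lemma measurable_mulVec {d M : ℕ} (w : Fin M → ℝ) :
    Measurable fun A : Matrix (Fin d) (Fin M) ℝ => A *ᵥ w := by
  unfold Matrix.mulVec dotProduct
  fun_prop

section SecondMoment

variable {Ω : Type*} [MeasurableSpace Ω] {μ : Measure Ω}

lemma integral_sq_eq_integral_sub_sq_add_sq [IsProbabilityMeasure μ] {X : Ω → ℝ} {a : ℝ}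
    (hX : MemLp X 2 μ) (ha : ∫ ω, X ω ∂μ = a) :
    ∫ ω, X ω ^ 2 ∂μ = ∫ ω, (X ω - a) ^ 2 ∂μ + a ^ 2 := by
  have h := variance_eq_sub hX
  rw [variance_eq_integral hX.aemeasurable, ha] at h
  simp only [Pi.pow_apply] at h
  linarith

lemma integral_sum_sq_eq_integral_sum_sub_sq_add [IsProbabilityMeasure μ] {ι : Type*} [Fintype ι]
    {X : Ω → ι → ℝ} {a : ι → ℝ} (hX : ∀ i, MemLp (fun ω => X ω i) 2 μ)
    (ha : ∀ i, ∫ ω, X ω i ∂μ = a i) :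
    ∫ ω, ∑ i, X ω i ^ 2 ∂μ = ∫ ω, ∑ i, (X ω i - a i) ^ 2 ∂μ + ∑ i, a i ^ 2 := by
  have hXa (i : ι) : MemLp (fun ω => X ω i - a i) 2 μ := (hX i).sub (memLp_const (a i))
  rw [integral_finsetSum _ fun i _ => (hX i).integrable_sq,
    integral_finsetSum _ fun i _ => (hXa i).integrable_sq, ← sum_add_distrib]
  exact sum_congr rfl fun i _ => integral_sq_eq_integral_sub_sq_add_sq (hX i) (ha i)

variable {d M : ℕ} {Y : Ω → Matrix (Fin d) (Fin M) ℝ}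

lemma integrable_frobNorm_sq (hY : ∀ a b, MemLp (fun ω => Y ω a b) 2 μ) :
    Integrable (fun ω => frobNorm (Y ω) ^ 2) μ := by
  simp only [frobNorm_sq]
  exact integrable_finsetSum _ fun a _ => integrable_finsetSum _ fun b _ => (hY a b).integrable_sq

lemma memLp_mulVec_apply {p : ENNReal} (hY : ∀ a b, MemLp (fun ω => Y ω a b) p μ)
    (w : Fin M → ℝ) (i : Fin d) : MemLp (fun ω => (Y ω *ᵥ w) i) p μ :=
  memLp_finsetSum univ fun k _ => (hY i k).mul_const (w k)

lemma integrable_eNorm_mulVec_sq (hY : ∀ a b, MemLp (fun ω => Y ω a b) 2 μ) (w : Fin M → ℝ) :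
    Integrable (fun ω => eNorm (Y ω *ᵥ w) ^ 2) μ := by
  simp only [eNorm_sq]
  exact integrable_finsetSum _ fun i _ => (memLp_mulVec_apply hY w i).integrable_sq

variable {J : Matrix (Fin d) (Fin M) ℝ}

lemma integral_mulVec_apply (hY : ∀ a b, Integrable (fun ω => Y ω a b) μ)
    (hmean : ∀ a b, ∫ ω, Y ω a b ∂μ = J a b) (w : Fin M → ℝ) (i : Fin d) :
    ∫ ω, (Y ω *ᵥ w) i ∂μ = (J *ᵥ w) i := by
  simp only [Matrix.mulVec, dotProduct]
  rw [integral_finsetSum _ fun k _ => (hY i k).mul_const (w k)]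
  simp only [integral_mul_const, hmean]

variable [IsProbabilityMeasure μ]

lemma integral_frobNorm_sq_eq (hY : ∀ a b, MemLp (fun ω => Y ω a b) 2 μ)
    (hmean : ∀ a b, ∫ ω, Y ω a b ∂μ = J a b) :
    ∫ ω, frobNorm (Y ω) ^ 2 ∂μ = ∫ ω, frobNorm (Y ω - J) ^ 2 ∂μ + frobNorm J ^ 2 := by
  simp only [frobNorm_sq, Matrix.sub_apply, ← Fintype.sum_prod_type']
  exact integral_sum_sq_eq_integral_sum_sub_sq_add (fun p => hY p.1 p.2) fun p => hmean p.1 p.2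

lemma integral_eNorm_mulVec_sq_eq (hY : ∀ a b, MemLp (fun ω => Y ω a b) 2 μ)
    (hmean : ∀ a b, ∫ ω, Y ω a b ∂μ = J a b) (w : Fin M → ℝ) :
    ∫ ω, eNorm (Y ω *ᵥ w) ^ 2 ∂μ = ∫ ω, eNorm ((Y ω - J) *ᵥ w) ^ 2 ∂μ + eNorm (J *ᵥ w) ^ 2 := by
  simp only [eNorm_sq, Matrix.sub_mulVec, Pi.sub_apply]
  exact integral_sum_sq_eq_integral_sum_sub_sq_add (memLp_mulVec_apply hY w)
    (integral_mulVec_apply (fun a b => (hY a b).integrable one_le_two) hmean w)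

end SecondMoment

theorem stmt11_general {Ω : Type*} [MeasurableSpace Ω] (μ : Measure Ω) [IsProbabilityMeasure μ]
    {d M : ℕ} {G c : ℝ} (hc : 0 ≤ c)
    (J : Matrix (Fin d) (Fin M) ℝ)
    (hJ : ∀ k : Fin M, eNorm (fun i => J i k) ≤ G)
    (w : Fin M → ℝ) (hw : w ∈ stdSimplex ℝ (Fin M))
    (Y₁ Y₂ : Ω → Matrix (Fin d) (Fin M) ℝ)
    (hindep : ProbabilityTheory.IndepFun Y₁ Y₂ μ)
    (hL2₁ : ∀ a b, MemLp (fun ω => Y₁ ω a b) 2 μ)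
    (hL2₂ : ∀ a b, MemLp (fun ω => Y₂ ω a b) 2 μ)
    (hmean₁ : ∀ a b, ∫ ω, Y₁ ω a b ∂μ = J a b)
    (hmean₂ : ∀ a b, ∫ ω, Y₂ ω a b ∂μ = J a b)
    (hfrob₁ : ∫ ω, frobNorm (Y₁ ω - J) ^ 2 ∂μ ≤ M * c)
    (hvec₂ : ∫ ω, eNorm ((Y₂ ω - J).mulVec w) ^ 2 ∂μ ≤ c) :
    ∫ ω, eNorm (((Y₁ ω)ᵀ * Y₂ ω).mulVec w) ^ 2 ∂μ ≤ M * (c + G ^ 2) ^ 2 := by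
  set F₁ : Ω → ℝ := fun ω => frobNorm (Y₁ ω) ^ 2
  set F₂ : Ω → ℝ := fun ω => eNorm (Y₂ ω *ᵥ w) ^ 2
  have hF₁ : ∫ ω, F₁ ω ∂μ ≤ M * (c + G ^ 2) := by
    rw [integral_frobNorm_sq_eq hL2₁ hmean₁]
    linarith [frobNorm_sq_le_of_eNorm_col_le hJ]
  have hF₂ : ∫ ω, F₂ ω ∂μ ≤ c + G ^ 2 := by
    rw [integral_eNorm_mulVec_sq_eq hL2₂ hmean₂]
    linarith [eNorm_mulVec_sq_le_of_mem_stdSimplex hJ hw]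
  have hindepF : IndepFun F₁ F₂ μ :=
    hindep.comp (measurable_frobNorm.pow_const 2)
      ((measurable_eNorm.comp (measurable_mulVec w)).pow_const 2)
  have hint₁ : Integrable F₁ μ := integrable_frobNorm_sq hL2₁
  have hint₂ : Integrable F₂ μ := integrable_eNorm_mulVec_sq hL2₂ w
  calc ∫ ω, eNorm (((Y₁ ω)ᵀ * Y₂ ω) *ᵥ w) ^ 2 ∂μ ≤ ∫ ω, F₁ ω * F₂ ω ∂μ :=
        integral_mono_of_nonneg (.of_forall fun _ => sq_nonneg _)
          (hindepF.integrable_mul hint₁ hint₂) (.of_forall fun ω => by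
            simpa only [Matrix.mulVec_mulVec] using
              eNorm_transpose_mulVec_sq_le (Y₁ ω) (Y₂ ω *ᵥ w))
    _ = (∫ ω, F₁ ω ∂μ) * ∫ ω, F₂ ω ∂μ :=
        hindepF.integral_mul_eq_mul_integral hint₁.1 hint₂.1
    _ ≤ M * (c + G ^ 2) * (c + G ^ 2) :=
        mul_le_mul hF₁ hF₂ (integral_nonneg fun _ => sq_nonneg _) (by positivity)
    _ = M * (c + G ^ 2) ^ 2 := by ring

/-- Let `J` be a fixed real `d × M` matrix whose columns have Euclidean norm
at most `G` (`G ≥ 0`), `w ∈ Δ_M` fixed, and `Y₁, Y₂` independent random matrices with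
`E[Yⱼ] = J` (entrywise), `E‖Yⱼ − J‖_F² ≤ M·c` for `j ∈ {1,2}`, and `E‖(Y₂ − J)w‖² ≤ c`,
for some `c ≥ 0`. Then `E‖Y₁ᵀ Y₂ w‖² ≤ M·(c + G²)²`. -/
theorem stmt11 {Ω : Type*} [MeasurableSpace Ω] (μ : Measure Ω) [IsProbabilityMeasure μ]
    {d M : ℕ} {G c : ℝ} (hG : 0 ≤ G) (hc : 0 ≤ c)
    (J : Matrix (Fin d) (Fin M) ℝ)
    (hJ : ∀ k : Fin M, eNorm (fun i => J i k) ≤ G)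
    (w : Fin M → ℝ) (hw : w ∈ stdSimplex ℝ (Fin M))
    (Y₁ Y₂ : Ω → Matrix (Fin d) (Fin M) ℝ)
    (hY₁meas : Measurable Y₁) (hY₂meas : Measurable Y₂)
    (hindep : ProbabilityTheory.IndepFun Y₁ Y₂ μ)
    (hL2₁ : ∀ a b, MemLp (fun ω => Y₁ ω a b) 2 μ)
    (hL2₂ : ∀ a b, MemLp (fun ω => Y₂ ω a b) 2 μ)
    (hmean₁ : ∀ a b, ∫ ω, Y₁ ω a b ∂μ = J a b)
    (hmean₂ : ∀ a b, ∫ ω, Y₂ ω a b ∂μ = J a b)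
    (hfrob₁ : ∫ ω, frobNorm (Y₁ ω - J) ^ 2 ∂μ ≤ M * c)
    (hfrob₂ : ∫ ω, frobNorm (Y₂ ω - J) ^ 2 ∂μ ≤ M * c)
    (hvec₂ : ∫ ω, eNorm ((Y₂ ω - J).mulVec w) ^ 2 ∂μ ≤ c) :
    ∫ ω, eNorm (((Y₁ ω)ᵀ * Y₂ ω).mulVec w) ^ 2 ∂μ ≤ M * (c + G ^ 2) ^ 2 :=
  stmt11_general μ hc J hJ w hw Y₁ Y₂ hindep hL2₁ hL2₂ hmean₁ hmean₂ hfrob₁ hvec₂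
end

section
/- Let E be a real inner product space, W ⊆ E a nonempty convex set, β > 0, g ∈ E, and w, u ∈ W. Suppose w⁺ ∈ W satisfies the variational characterization of the metric projection of w − β·g onto W, i.e., ⟨(w − β·g) − w⁺, v − w⁺⟩ ≤ 0 for all v ∈ W. Then ⟨g, w − u⟩ ≤ (‖w − u‖² − ‖w⁺ − u‖²)/(2β) + (β/2)‖g‖². -/
open scoped RealInnerProductSpace

/-- Let `W` be a nonempty convex subset of a real inner product space,
`β > 0`, `g` a vector, and `w, u ∈ W`. If `w⁺ ∈ W` satisfies the variational characterization
of the metric projection of `w − β • g` onto `W`, then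
`⟨g, w − u⟩ ≤ (‖w − u‖² − ‖w⁺ − u‖²)/(2β) + (β/2)‖g‖²`. -/
theorem stmt12 {E : Type*} [NormedAddCommGroup E] [InnerProductSpace ℝ E]
    (W : Set E) (hWne : W.Nonempty) (hWconv : Convex ℝ W)
    {β : ℝ} (hβ : 0 < β) (g w u wplus : E)
    (hw : w ∈ W) (hu : u ∈ W) (hwplus : wplus ∈ W)
    (hproj : ∀ v ∈ W, ⟪(w - β • g) - wplus, v - wplus⟫ ≤ 0) :
    ⟪g, w - u⟫ ≤ (‖w - u‖ ^ 2 - ‖wplus - u‖ ^ 2) / (2 * β) + (β / 2) * ‖g‖ ^ 2 := by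
  have h1 := hproj u hu
  have h1' : ⟪w - wplus, u - wplus⟫ - β * ⟪g, u - wplus⟫ ≤ 0 := by
    have : (w - β • g) - wplus = (w - wplus) - β • g := by abel
    rw [this, inner_sub_left, real_inner_smul_left] at h1
    linarith
  have hexp : ‖w - u‖ ^ 2 = ‖w - wplus‖ ^ 2 + 2 * ⟪w - wplus, wplus - u⟫ + ‖wplus - u‖ ^ 2 := by
    have : w - u = (w - wplus) + (wplus - u) := by abel
    rw [this, norm_add_sq_real]
  have hcs : ⟪g, w - wplus⟫ ≤ ‖g‖ * ‖w - wplus‖ := real_inner_le_norm g (w - wplus)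
  have hsplit : ⟪g, w - u⟫ = ⟪g, w - wplus⟫ + ⟪g, wplus - u⟫ := by
    rw [← inner_add_right]; congr 1; abel
  have hswap : ⟪w - wplus, u - wplus⟫ = - ⟪w - wplus, wplus - u⟫ := by
    rw [← inner_neg_right]; congr 1; abel
  have hswap2 : ⟪g, u - wplus⟫ = - ⟪g, wplus - u⟫ := by
    rw [← inner_neg_right]; congr 1; abel
  rw [hswap, hswap2] at h1'
  rw [hsplit, div_add' _ _ _ (by positivity), le_div_iff₀ (by positivity)]
  nlinarith [sq_nonneg (‖g‖ * β - ‖w - wplus‖), norm_nonneg (w - wplus), norm_nonneg g,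
    mul_pos hβ hβ, hβ.le]
end
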